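/- Early-termination correctness: let X be a finite nonempty set, f, L : X → ℝ with L(x) ≤ f(x) for all x. Suppose the elements of X are processed in nondecreasing order of L, maintaining best = min of f over processed elements, and processing stops at the first element x with best < L(x). Then at termination, best = min_{x∈X} f(x). -/

import Mathlib

/-! Since `L` is nondecreasing along `l`, every element `y` not yet processed satisfies
`f y ≥ L y ≥ L x`, where `x` is the element at which processing stopped; as `best < L x`,
no such `y` can lower the minimum. -/

theorem Finset.inf'_eq_inf'_of_subset {α β : Type*} [LinearOrder β] {S X : Finset α}
    (hS : S.Nonempty) (hX : X.Nonempty) (hSX : S ⊆ X) {f : α → β}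
    (h : ∀ y ∈ X, y ∉ S → S.inf' hS f ≤ f y) : S.inf' hS f = X.inf' hX f := by
  refine le_antisymm (Finset.le_inf' hX _ fun y hy => ?_) (Finset.inf'_mono f hSX hS)
  by_cases hyS : y ∈ S
  · exact Finset.inf'_le f hyS
  · exact h y hy hyS

namespace List

variable {α : Type*} {l : List α} {t : ℕ} {y : α}

theorem mem_drop_of_mem_of_not_mem_take (hy : y ∈ l) (hyt : y ∉ l.take t) : y ∈ l.drop t := by
  rw [← take_append_drop t l, mem_append] at hy
  exact hy.resolve_left hyt

theorem lt_length_of_mem_drop (hy : y ∈ l.drop t) : t < l.length := by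
  by_contra! hle
  simp [drop_eq_nil_of_le hle] at hy

theorem Pairwise.le_of_mem_drop {β : Type*} [Preorder β] {L : α → β}
    (hsort : l.Pairwise (fun a b => L a ≤ L b)) (ht : t < l.length) (hy : y ∈ l.drop t) :
    L l[t] ≤ L y := by
  have hcons := drop_eq_getElem_cons ht ▸ hsort.drop (i := t)
  rw [drop_eq_getElem_cons ht, mem_cons] at hy
  rcases hy with rfl | hy
  · exact le_rfl
  · exact (pairwise_cons.mp hcons).1 y hy

end List

theorem early_termination_correct {α : Type*} [DecidableEq α]
    (X : Finset α) (hne : X.Nonempty) (f L : α → ℝ)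
    (hLf : ∀ x ∈ X, L x ≤ f x)
    (l : List α) (hl : l.toFinset = X)
    (hsort : l.Pairwise (fun a b => L a ≤ L b))
    (t : ℕ)
    (hne' : ((l.take t).toFinset).Nonempty)
    (hstop : ∀ ht : t < l.length,
      ((l.take t).toFinset).inf' hne' f < L (l.get ⟨t, ht⟩)) :
    ((l.take t).toFinset).inf' hne' f = X.inf' hne f := by
  subst hl
  refine Finset.inf'_eq_inf'_of_subset hne' hne
    (Multiset.toFinset_subset.mpr (List.take_subset t l)) fun y hy hyt => ?_
  have hdrop := List.mem_drop_of_mem_of_not_mem_take (List.mem_toFinset.mp hy)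
    (mt List.mem_toFinset.mpr hyt)
  have ht := List.lt_length_of_mem_drop hdrop
  calc _ ≤ L (l.get ⟨t, ht⟩) := (hstop ht).le
    _ ≤ L y := hsort.le_of_mem_drop ht hdrop
    _ ≤ f y := hLf y hy
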